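/- Let p be a prime, n a natural number divisible by p, k = F_p[t_1,…,t_{n+1}]/(t_1^2,…,t_{n+1}^2), and M = k^{n+1}/⟨t_1 e_1 + ⋯ + t_{n+1} e_{n+1}⟩ where e_1,…,e_{n+1} is the standard basis. Then the element t_1 e_1 ∧ t_2 e_2 ∧ ⋯ ∧ t_n e_n ∈ Λ^n M lies in the kernel of the Koszul map ∂ : Λ^n M → M ⊗ Λ^{n-1} M given by ∂(a_1∧⋯∧a_n) = Σ_i (-1)^{i+1} a_i ⊗ a_1∧⋯∧â_i∧⋯∧a_n. -/
import Mathlib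

/-!
STATEMENT 5: Let `p` be a prime dividing `n` (`n = m+1 ≥ 1`), let
`k = F_p[t_1,…,t_{n+1}]/(t_i²)` and `M = k^{n+1}/⟨∑ t_i e_i⟩`.  Then the element
`t_1e_1 ∧ ⋯ ∧ t_ne_n ∈ Λ^n M` lies in the kernel of the Koszul map
`∂ : Λ^n M → M ⊗ Λ^{n-1} M`, `∂(a_1∧⋯∧a_n) = ∑ (-1)^{i+1} a_i ⊗ a_1∧⋯âᵢ⋯∧a_n`.
-/

open scoped TensorProduct
open MvPolynomial

set_option maxHeartbeats 1000000
set_option synthInstance.maxHeartbeats 400000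

noncomputable section

/-- `k = F_p[t_1, …, t_{n+1}]/(t_1², …, t_{n+1}²)` (with `n = m + 1`). -/
abbrev KK (p m : ℕ) : Type :=
  MvPolynomial (Fin (m + 2)) (ZMod p) ⧸
    Ideal.span (Set.range fun i : Fin (m + 2) => (X i : MvPolynomial (Fin (m + 2)) (ZMod p)) ^ 2)

/-- The class of the variable `t_i` in `k`. -/
def tK (p m : ℕ) (i : Fin (m + 2)) : KK p m := Ideal.Quotient.mk _ (X i)

/-- `M = k^{n+1}/⟨t_1e_1 + ⋯ + t_{n+1}e_{n+1}⟩`. -/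
abbrev MM (p m : ℕ) : Type :=
  (Fin (m + 2) → KK p m) ⧸ Submodule.span (KK p m) {(fun i => tK p m i : Fin (m + 2) → KK p m)}

/-- The element `t_j e_j ∈ M` for `1 ≤ j ≤ n`. -/
def xElt (p m : ℕ) (j : Fin (m + 1)) : MM p m :=
  Submodule.Quotient.mk (Pi.single j.castSucc (tK p m j.castSucc))

/-- The wedge `v 0 ∧ ⋯ ∧ v (n-1)` in the `n`-th exterior power. -/
def wedgeMk (R : Type*) [CommRing R] (M : Type*) [AddCommGroup M] [Module R M]
    (n : ℕ) (v : Fin n → M) : ⋀[R]^n M :=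
  ⟨ExteriorAlgebra.ιMulti R n v, by
    rw [← ExteriorAlgebra.ιMulti_span_fixedDegree]
    exact Submodule.subset_span ⟨v, rfl⟩⟩

/-- The element `t_1e_1 ∧ t_2e_2 ∧ ⋯ ∧ t_ne_n ∈ Λ^n M`. -/
def kosElt (p m : ℕ) : ⋀[KK p m]^(m + 1) (MM p m) :=
  wedgeMk (KK p m) (MM p m) (m + 1) (xElt p m)

/-! ### Auxiliary lemmas about `KK` and `MM` -/

lemma tK_sq (p m : ℕ) (i : Fin (m + 2)) : tK p m i * tK p m i = 0 := by
  rw [tK, ← map_mul, ← sq, Ideal.Quotient.eq_zero_iff_mem]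
  exact Ideal.subset_span ⟨i, rfl⟩

/-- The basis vector `e_j` in `M`. -/
def eV (p m : ℕ) (j : Fin (m + 2)) : MM p m :=
  Submodule.Quotient.mk (Pi.single j (1 : KK p m))

lemma xElt_def (p m : ℕ) (j : Fin (m + 1)) :
    xElt p m j = tK p m j.castSucc • eV p m j.castSucc := by
  rw [xElt, eV, ← Submodule.Quotient.mk_smul]
  congr 1
  ext i
  simp [Pi.single_apply]

lemma sum_rel (p m : ℕ) : ∑ j, tK p m j • eV p m j = 0 := by
  have : (∑ j, tK p m j • eV p m j) =
      (Submodule.span (KK p m) {(fun i => tK p m i : Fin (m + 2) → KK p m)}).mkQ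
        (∑ j, Pi.single j (tK p m j)) := by
    rw [map_sum]
    refine Finset.sum_congr rfl fun j _ => ?_
    rw [eV, Submodule.mkQ_apply, ← Submodule.Quotient.mk_smul]
    congr 1
    ext i
    simp [Pi.single_apply]
  rw [this, Finset.univ_sum_single, Submodule.mkQ_apply, Submodule.Quotient.mk_eq_zero]
  exact Submodule.subset_span rfl

/-! ### Generic lemmas about wedges -/

section generic
variable {R : Type*} [CommRing R] {M : Type*} [AddCommGroup M] [Module R M]

lemma wedgeMk_update_smul {n : ℕ} (v : Fin n → M) (k : Fin n) (c : R) (x : M) :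
    wedgeMk R M n (Function.update v k (c • x)) = c • wedgeMk R M n (Function.update v k x) := by
  apply Subtype.ext
  exact (ExteriorAlgebra.ιMulti R n).toMultilinearMap.map_update_smul v k c x

lemma wedgeMk_update_zero {n : ℕ} (v : Fin n → M) (k : Fin n) :
    wedgeMk R M n (Function.update v k 0) = 0 := by
  apply Subtype.ext
  exact (ExteriorAlgebra.ιMulti R n).toMultilinearMap.map_update_zero v k

lemma wedgeMk_update_sum {n : ℕ} {α : Type*} (t : Finset α) (k : Fin n) (g : α → M)
    (v : Fin n → M) :
    wedgeMk R M n (Function.update v k (∑ a ∈ t, g a)) =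
      ∑ a ∈ t, wedgeMk R M n (Function.update v k (g a)) := by
  apply Subtype.ext
  rw [show (↑(∑ a ∈ t, wedgeMk R M n (Function.update v k (g a))) : ExteriorAlgebra R M)
      = ∑ a ∈ t, ↑(wedgeMk R M n (Function.update v k (g a))) from
    (Submodule.coe_sum _ _ _)]
  exact (ExteriorAlgebra.ιMulti R n).toMultilinearMap.map_update_sum t k g v

lemma smul_neg_smul_cancel {A : Type*} [AddCommGroup A] [Module R A] (c : R) (x : A)
    (h : c * c = 1) : c • -(c • x) = -x := by
  rw [smul_neg, smul_smul, h, one_smul]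

lemma wedgeMk_update_neg {n : ℕ} (v : Fin n → M) (k : Fin n) (x : M) :
    wedgeMk R M n (Function.update v k (-x)) = - wedgeMk R M n (Function.update v k x) := by
  rw [← neg_one_smul R x, wedgeMk_update_smul]; module

variable {n : ℕ} (t : Fin (n + 2) → R) (e : Fin (n + 2) → M) (a : Fin (n + 1) → M)

/-- Kill lemma: if some slot of `v` equals `a j = t j • e j`, then `t j • wedge v = 0`. -/
lemma kill (hsq : ∀ i, t i * t i = 0) (ha : ∀ j, a j = t j.castSucc • e j.castSucc)
    {n' : ℕ} (v : Fin n' → M) (k : Fin n') (j : Fin (n + 1)) (h : v k = a j) :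
    t j.castSucc • wedgeMk R M n' v = 0 := by
  have hv : v = Function.update v k (t j.castSucc • e j.castSucc) := by
    rw [← ha, ← h, Function.update_eq_self]
  rw [hv, wedgeMk_update_smul, smul_smul, hsq, zero_smul]

lemma kill' (hsq : ∀ i, t i * t i = 0) (ha : ∀ j, a j = t j.castSucc • e j.castSucc)
    (i j : Fin (n + 1)) (hij : j ≠ i) :
    t j.castSucc • wedgeMk R M n (i.removeNth a) = 0 := by
  obtain ⟨k, hk⟩ := Fin.exists_succAbove_eq hij
  exact kill t e a hsq ha _ k j (by simp [Fin.removeNth, hk])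

/-- Splitting the relation at one index. -/
lemma rel_split (hrel : ∑ i, t i • e i = 0) (j₀ : Fin (n + 2)) :
    t j₀ • e j₀ = -∑ j ∈ Finset.univ.erase j₀, t j • e j := by
  have h := Finset.add_sum_erase Finset.univ (fun j => t j • e j) (Finset.mem_univ j₀)
  rw [hrel] at h
  exact eq_neg_of_add_eq_zero_left h

/-- `a i ⊗ w i = -(e last ⊗ (t last • w i))`. -/
lemma tensor_step (hsq : ∀ i, t i * t i = 0) (hrel : ∑ i, t i • e i = 0)
    (ha : ∀ j, a j = t j.castSucc • e j.castSucc) (i : Fin (n + 1)) :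
    a i ⊗ₜ[R] wedgeMk R M n (i.removeNth a) =
      -(e (Fin.last (n + 1)) ⊗ₜ[R]
        (t (Fin.last (n + 1)) • wedgeMk R M n (i.removeNth a))) := by
  classical
  rw [ha, rel_split t e hrel i.castSucc, TensorProduct.neg_tmul, TensorProduct.sum_tmul]
  rw [Finset.sum_eq_single_of_mem (Fin.last (n + 1))]
  · rw [TensorProduct.smul_tmul]
  · refine Finset.mem_erase.2 ⟨?_, Finset.mem_univ _⟩
    simp only [ne_eq, Fin.ext_iff, Fin.val_last, Fin.coe_castSucc]
    have := i.castSucc.isLt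
    omega
  · intro j hj hjl
    obtain ⟨j', rfl⟩ := Fin.exists_castSucc_eq.2 hjl
    have hj' : j' ≠ i := fun h => (Finset.mem_erase.1 hj).1 (by rw [h])
    rw [TensorProduct.smul_tmul, kill' t e a hsq ha i j' hj', TensorProduct.tmul_zero]

/-- The sign flip between consecutive removals. -/
lemma flip_step (hsq : ∀ i, t i * t i = 0) (hrel : ∑ i, t i • e i = 0)
    (ha : ∀ j, a j = t j.castSucc • e j.castSucc) (i : Fin n) :
    t (Fin.last (n + 1)) • wedgeMk R M n ((i.castSucc).removeNth a) =
      -(t (Fin.last (n + 1)) • wedgeMk R M n ((i.succ).removeNth a)) := by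
  classical
  have hv : (i.castSucc).removeNth a = (i.castSucc).removeNth a := rfl
  have hvi : (i.castSucc).removeNth a i = a i.succ := by
    simp [Fin.removeNth, Fin.succAbove_castSucc_self]
  have hup : Function.update ((i.castSucc).removeNth a) i (a i.castSucc) = (i.succ).removeNth a := by
    funext k
    rcases eq_or_ne k i with rfl | hk
    · simp [Fin.removeNth, Fin.succAbove_succ_self]
    · rw [Function.update_of_ne hk]
      simp only [Fin.removeNth]
      congr 1
      rcases lt_or_gt_of_ne hk with hlt | hgt
      · rw [Fin.succAbove_of_castSucc_lt _ _ (by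
            simp only [Fin.lt_def, Fin.coe_castSucc]; exact hlt),
          Fin.succAbove_of_castSucc_lt _ _ (by
            simp only [Fin.lt_def, Fin.coe_castSucc, Fin.val_succ]
            exact Nat.lt_succ_of_lt hlt)]
      · rw [Fin.succAbove_of_le_castSucc _ _ (by
            simp only [Fin.le_def, Fin.coe_castSucc]; exact hgt.le),
          Fin.succAbove_of_le_castSucc _ _ (by
            simp only [Fin.le_def, Fin.coe_castSucc, Fin.val_succ]
            exact hgt)]
  have hv' : (i.castSucc).removeNth a = Function.update ((i.castSucc).removeNth a) i (a i.succ) := by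
    rw [← hvi, Function.update_eq_self]
  have hmem : (i.castSucc.castSucc : Fin (n + 2)) ∈
      Finset.univ.erase ((i.succ.castSucc : Fin (n + 2))) := by
    refine Finset.mem_erase.2 ⟨?_, Finset.mem_univ _⟩
    simp only [ne_eq, Fin.ext_iff, Fin.coe_castSucc, Fin.val_succ]
    omega
  have hzero : ∀ j ∈ Finset.univ.erase ((i.succ.castSucc : Fin (n + 2))),
      j ≠ i.castSucc.castSucc →
      t (Fin.last (n + 1)) • wedgeMk R M n
        (Function.update ((i.castSucc).removeNth a) i (t j • e j)) = 0 := by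
    intro j hj hjne
    rw [wedgeMk_update_smul]
    rcases eq_or_ne j (Fin.last (n + 1)) with rfl | hjl
    · rw [smul_smul, hsq, zero_smul]
    · obtain ⟨j', rfl⟩ := Fin.exists_castSucc_eq.2 hjl
      have h1 : j' ≠ i.castSucc := fun h => hjne (by rw [h])
      have h2 : j' ≠ i.succ := fun h => (Finset.mem_erase.1 hj).1 (by rw [h])
      obtain ⟨k, hk⟩ := Fin.exists_succAbove_eq h1
      have hki : k ≠ i := by
        rintro rfl
        exact h2 (by rw [← hk, Fin.succAbove_castSucc_self])
      have hslot : (Function.update ((i.castSucc).removeNth a) i (e j'.castSucc)) k = a j' := by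
        rw [Function.update_of_ne hki]
        simp [Fin.removeNth, hk]
      rw [kill t e a hsq ha _ k j' hslot, smul_zero]
  conv_lhs => rw [hv']
  rw [ha i.succ, rel_split t e hrel (i.succ).castSucc, wedgeMk_update_neg,
    wedgeMk_update_sum, smul_neg, Finset.smul_sum,
    Finset.sum_eq_single_of_mem _ hmem (fun j hj hjne => hzero j hj hjne),
    ← ha i.castSucc, hup]

/-- Signs: `t last • w i = (-1)^i • (t last • w 0)`. -/
lemma sign_prop (hsq : ∀ i, t i * t i = 0) (hrel : ∑ i, t i • e i = 0)
    (ha : ∀ j, a j = t j.castSucc • e j.castSucc) (i : Fin (n + 1)) :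
    t (Fin.last (n + 1)) • wedgeMk R M n (i.removeNth a) =
      ((-1 : R) ^ (i : ℕ)) •
        (t (Fin.last (n + 1)) • wedgeMk R M n ((0 : Fin (n + 1)).removeNth a)) := by
  induction i using Fin.induction with
  | zero => simp
  | succ i ih =>
    have hflip := flip_step t e a hsq hrel ha i
    have hB : t (Fin.last (n + 1)) • wedgeMk R M n ((i.succ).removeNth a) =
        -(t (Fin.last (n + 1)) • wedgeMk R M n ((i.castSucc).removeNth a)) := by
      rw [hflip, neg_neg]
    rw [hB, ih, Fin.val_succ, Fin.coe_castSucc, pow_succ]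
    module

/-- The main generic computation. -/
lemma main_generic (hsq : ∀ i, t i * t i = 0) (hrel : ∑ i, t i • e i = 0)
    (ha : ∀ j, a j = t j.castSucc • e j.castSucc) (hchar : ((n + 1 : ℕ) : R) = 0) :
    ∑ i : Fin (n + 1), ((-1 : R) ^ (i : ℕ)) •
      (a i ⊗ₜ[R] wedgeMk R M n (i.removeNth a)) = 0 := by
  classical
  have hterm : ∀ i : Fin (n + 1), ((-1 : R) ^ (i : ℕ)) •
      (a i ⊗ₜ[R] wedgeMk R M n (i.removeNth a)) =
      -(e (Fin.last (n + 1)) ⊗ₜ[R]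
        (t (Fin.last (n + 1)) • wedgeMk R M n ((0 : Fin (n + 1)).removeNth a))) := by
    intro i
    have hc : ((-1 : R) ^ (i : ℕ)) * ((-1 : R) ^ (i : ℕ)) = 1 := by
      rw [← pow_add]
      exact Even.neg_one_pow ⟨(i : ℕ), rfl⟩
    rw [tensor_step t e a hsq hrel ha i, sign_prop t e a hsq hrel ha i,
      TensorProduct.tmul_smul]
    exact smul_neg_smul_cancel ((-1 : R) ^ (i : ℕ))
      (e (Fin.last (n + 1)) ⊗ₜ[R]
        (t (Fin.last (n + 1)) • wedgeMk R M n ((0 : Fin (n + 1)).removeNth a))) hc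
  rw [Finset.sum_congr rfl (fun i _ => hterm i), Finset.sum_const, Finset.card_univ,
    Fintype.card_fin, ← Nat.cast_smul_eq_nsmul R, hchar, zero_smul]

end generic

theorem statement5 (p m : ℕ) (hp : p.Prime) (hdvd : p ∣ (m + 1))
    -- the Koszul map `∂ : Λ^n M → M ⊗ Λ^{n-1} M`
    (d : (⋀[KK p m]^(m + 1) (MM p m) : Submodule (KK p m) _) →ₗ[KK p m]
      (MM p m ⊗[KK p m] (⋀[KK p m]^m (MM p m) : Submodule (KK p m) _)))
    (hd : ∀ a : Fin (m + 1) → MM p m,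
      d (wedgeMk (KK p m) (MM p m) (m + 1) a) =
        ∑ i : Fin (m + 1), ((-1 : KK p m) ^ (i : ℕ)) •
          (a i ⊗ₜ[KK p m] wedgeMk (KK p m) (MM p m) m (i.removeNth a))) :
    d (kosElt p m) = 0 := by
  have hp0 : ((p : ℕ) : KK p m) = 0 := by
    have h2 : ((p : ℕ) : KK p m) =
        Ideal.Quotient.mk _ ((p : ℕ) : MvPolynomial (Fin (m + 2)) (ZMod p)) :=
      (map_natCast (Ideal.Quotient.mk _) p).symm
    have h1 : ((p : ℕ) : MvPolynomial (Fin (m + 2)) (ZMod p)) =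
        C ((p : ℕ) : ZMod p) := (map_natCast (C : ZMod p →+* _) p).symm
    rw [h2, h1, ZMod.natCast_self, map_zero, map_zero]
  have hchar : ((m + 1 : ℕ) : KK p m) = 0 := by
    obtain ⟨c, hc⟩ := hdvd
    rw [hc, Nat.cast_mul, hp0, zero_mul]
  rw [show kosElt p m = wedgeMk (KK p m) (MM p m) (m + 1) (xElt p m) from rfl, hd]
  exact main_generic (tK p m) (eV p m) (xElt p m) (tK_sq p m) (sum_rel p m)
    (xElt_def p m) hchar

end
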